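/- For every integer n ≥ 6 with n ∉ {8, 9}, J̃(n,3) is maximal as a three-distance set in the hyperplane H(n,3); on the other hand, J̃(8,3) and J̃(9,3) are not maximal as three-distance sets in H(8,3) and H(9,3), respectively. -/

import Mathlib

noncomputable section

/-- The set of distances between distinct points of `S`. -/
def distSet {n : ℕ} (S : Set (EuclideanSpace ℝ (Fin n))) : Set ℝ :=
  {d | ∃ x ∈ S, ∃ y ∈ S, x ≠ y ∧ d = dist x y}

/-- `S` is an `s`-distance set: exactly `s` distances occur between distinct points. -/
def IsSDistanceSet {n : ℕ} (s : ℕ) (S : Set (EuclideanSpace ℝ (Fin n))) : Prop :=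
  (distSet S).Finite ∧ (distSet S).ncard = s

/-- The representation `J̃(n,m)` of the Johnson graph `J(n,m)`: vectors with exactly `m`
coordinates equal to `1` and the rest equal to `0`. -/
def JohnsonRep (n m : ℕ) : Set (EuclideanSpace ℝ (Fin n)) :=
  {x | (∀ i, x i = 0 ∨ x i = 1) ∧ {i : Fin n | x i = 1}.ncard = m}

/-- The hyperplane `H(n,m) = {x : ∑ x_i = m}`. -/
def Hyp (n m : ℕ) : Set (EuclideanSpace ℝ (Fin n)) :=
  {x | ∑ i, x i = (m : ℝ)}

/-- `J̃(n,m)` is maximal as an `m`-distance set in the hyperplane `H(n,m)`. -/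
def JohnsonRepMaximal (n m : ℕ) : Prop :=
  ¬∃ y ∈ Hyp n m \ JohnsonRep n m, IsSDistanceSet m (JohnsonRep n m ∪ {y})

/-!
For a `3`-subset `T` with indicator vector `1_T`, `|1_T - y|² = 3 - 2 ∑_{i ∈ T} y_i + |y|²`.
Since `J̃(n,3)` already realises the three distances `√2, 2, √6` when `n ≥ 6`, a point `y` can be
added exactly when all these squared distances lie in `{2, 4, 6}`, i.e. when the sums of `y` over
`3`-subsets take only the three consecutive values `τ, τ + 1, τ + 2`. Exchanging one element of a
triple shows that `y = a + e` with `a = min y` and `e` taking values in `{0, 1, 2}`; the condition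
`∑ y_i = 3` then eliminates `a` and leaves `n (∑ e_i² - 3 - 2τ) = (∑ e_i - 3)²`. If some `e_j = 2`,
every pair sum of the other coordinates equals `τ`, so they are all equal and the equation forces
`n = 9`. Otherwise `e` is the indicator of a set of size `q`, and the triples containing `0`, `3`
or `3 - (n - q)` of its elements leave only `n = 9` (`q = 0`) and `n = 8` (`q = n - 1`). The points
`(1/3, …, 1/3)` and `(-1/2, 1/2, …, 1/2)` realise these two cases.
-/

open Finset

section Finite

variable {α : Type*} [Fintype α] [DecidableEq α]

lemma exists_card_eq_card_inter_eq (B : Finset α) {m k : ℕ} (hkm : k ≤ m) (hkB : k ≤ #B)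
    (hmk : m - k ≤ #Bᶜ) : ∃ T : Finset α, #T = m ∧ #(T ∩ B) = k := by
  obtain ⟨X, hXB, hX⟩ := exists_subset_card_eq hkB
  obtain ⟨Y, hYB, hY⟩ := exists_subset_card_eq hmk
  have hYB' : Disjoint Y B := disjoint_of_subset_left hYB disjoint_compl_left
  have hXY : Disjoint X Y := disjoint_of_subset_left hXB hYB'.symm
  refine ⟨X ∪ Y, by rw [card_union_of_disjoint hXY]; omega, ?_⟩
  rw [union_inter_distrib_right, inter_eq_left.2 hXB, disjoint_iff_inter_eq_empty.1 hYB',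
    union_empty, hX]

lemma exists_ne_of_card_add_two_le (s : Finset α) (h : #s + 2 ≤ Fintype.card α) :
    ∃ k l, k ≠ l ∧ k ∉ s ∧ l ∉ s := by
  obtain ⟨k, hk, l, hl, hkl⟩ := one_lt_card.1 (show 1 < #sᶜ by rw [card_compl]; omega)
  exact ⟨k, l, hkl, mem_compl.1 hk, mem_compl.1 hl⟩

lemma sum_eq_add_add_of_eq_off_pair {f : α → ℝ} {i j : α} (hij : i ≠ j) {c : ℝ}
    (hf : ∀ k, k ≠ i → k ≠ j → f k = c) :
    ∑ k, f k = f i + f j + (Fintype.card α - 2) * c := by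
  have hdev : ∑ k, (f k - c) = (f i - c) + (f j - c) := by
    rw [← sum_pair (f := fun k => f k - c) hij]
    refine (sum_subset (subset_univ _) fun k _ hk => ?_).symm
    simp only [mem_insert, mem_singleton, not_or] at hk
    rw [hf k hk.1 hk.2, sub_self]
  rw [sum_sub_distrib, sum_const, card_univ, nsmul_eq_mul] at hdev
  linarith

end Finite

lemma mem_sqrt_image_iff_sq_mem {D : Set ℝ} (hD : ∀ d ∈ D, 0 ≤ d) {r : ℝ} (hr : 0 ≤ r) :
    r ∈ Real.sqrt '' D ↔ r ^ 2 ∈ D := by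
  constructor
  · rintro ⟨d, hd, rfl⟩
    rwa [Real.sq_sqrt (hD d hd)]
  · exact fun h => ⟨r ^ 2, h, Real.sqrt_sq hr⟩

lemma two_four_six_nonneg : ∀ d ∈ ({2, 4, 6} : Set ℝ), 0 ≤ d := by
  rintro d (rfl | rfl | rfl) <;> norm_num

section JohnsonRep

variable {n : ℕ}

def indicatorVec (T : Finset (Fin n)) : EuclideanSpace ℝ (Fin n) :=
  WithLp.toLp 2 fun i => if i ∈ T then 1 else 0

@[simp]
lemma indicatorVec_apply (T : Finset (Fin n)) (i : Fin n) :
    indicatorVec T i = if i ∈ T then 1 else 0 := rfl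

lemma mem_johnsonRep_iff {m : ℕ} {x : EuclideanSpace ℝ (Fin n)} :
    x ∈ JohnsonRep n m ↔ ∃ T : Finset (Fin n), #T = m ∧ indicatorVec T = x := by
  constructor
  · rintro ⟨h01, hm⟩
    refine ⟨({i | x i = 1} : Finset (Fin n)), by rwa [← Set.ncard_coe_finset, coe_filter_univ], ?_⟩
    ext i
    rcases h01 i with h | h <;> simp [h]
  · rintro ⟨T, rfl, rfl⟩
    refine ⟨fun i => by by_cases h : i ∈ T <;> simp [h], ?_⟩
    convert Set.ncard_coe_finset T
    ext i
    by_cases h : i ∈ T <;> simp [h]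

lemma indicatorVec_injective : Function.Injective (indicatorVec (n := n)) := by
  intro S T h
  ext i
  have hi := congrArg (fun x : EuclideanSpace ℝ (Fin n) => x i) h
  by_cases hS : i ∈ S <;> by_cases hT : i ∈ T <;> simp [hS, hT] at hi ⊢

lemma indicatorVec_mem_johnsonRep {m : ℕ} {T : Finset (Fin n)} (hT : #T = m) :
    indicatorVec T ∈ JohnsonRep n m :=
  mem_johnsonRep_iff.2 ⟨T, hT, rfl⟩

lemma dist_indicatorVec_sq (T : Finset (Fin n)) (y : EuclideanSpace ℝ (Fin n)) :
    dist (indicatorVec T) y ^ 2 = #T - 2 * ∑ i ∈ T, y i + ∑ i, y i ^ 2 := by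
  have hterm : ∀ i, dist (indicatorVec T i) (y i) ^ 2
      = (if i ∈ T then 1 else 0) - 2 * (if i ∈ T then y i else 0) + y i ^ 2 := by
    intro i
    rw [Real.dist_eq, sq_abs, indicatorVec_apply]
    split_ifs <;> ring
  rw [EuclideanSpace.dist_eq, Real.sq_sqrt (by positivity), sum_congr rfl fun i _ => hterm i,
    sum_add_distrib, sum_sub_distrib, ← mul_sum, sum_boole, ← sum_filter, filter_mem_eq_inter,
    univ_inter]

lemma dist_indicatorVec_indicatorVec_sq (S T : Finset (Fin n)) :
    dist (indicatorVec S) (indicatorVec T) ^ 2 = #S + #T - 2 * #(S ∩ T) := by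
  have hsq : ∀ i, indicatorVec T i ^ 2 = if i ∈ T then 1 else 0 := fun i => by
    by_cases h : i ∈ T <;> simp [h]
  rw [dist_indicatorVec_sq, sum_congr rfl fun i _ => hsq i]
  simp only [indicatorVec_apply, sum_boole, filter_mem_eq_inter, univ_inter]
  ring

lemma distSet_mono {S T : Set (EuclideanSpace ℝ (Fin n))} (h : S ⊆ T) :
    distSet S ⊆ distSet T := by
  rintro d ⟨x, hx, y, hy, hxy, rfl⟩
  exact ⟨x, h hx, y, h hy, hxy, rfl⟩

lemma dist_sq_mem_of_mem_johnsonRep {x x' : EuclideanSpace ℝ (Fin n)} (hx : x ∈ JohnsonRep n 3)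
    (hx' : x' ∈ JohnsonRep n 3) (hne : x ≠ x') : dist x x' ^ 2 ∈ ({2, 4, 6} : Set ℝ) := by
  obtain ⟨S, hS, rfl⟩ := mem_johnsonRep_iff.1 hx
  obtain ⟨T, hT, rfl⟩ := mem_johnsonRep_iff.1 hx'
  have hlt : #(S ∩ T) < 3 := by
    refine lt_of_le_of_ne (hS ▸ card_le_card inter_subset_left) fun h => hne ?_
    have hSS := eq_of_subset_of_card_le inter_subset_left (by omega : #S ≤ #(S ∩ T))
    have hST := eq_of_subset_of_card_le inter_subset_right (by omega : #T ≤ #(S ∩ T))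
    rw [← hSS, hST]
  rw [dist_indicatorVec_indicatorVec_sq, hS, hT]
  interval_cases #(S ∩ T) <;> norm_num

lemma exists_dist_sq_eq (hn : 6 ≤ n) {k : ℕ} (hk : k < 3) :
    ∃ S T : Finset (Fin n), #S = 3 ∧ #T = 3 ∧ S ≠ T ∧
      dist (indicatorVec S) (indicatorVec T) ^ 2 = 6 - 2 * k := by
  obtain ⟨S, -, hS⟩ := exists_subset_card_eq (s := (univ : Finset (Fin n))) (n := 3)
    (by rw [card_univ, Fintype.card_fin]; omega)
  obtain ⟨T, hT, hST⟩ := exists_card_eq_card_inter_eq S (m := 3) hk.le (by omega)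
    (by rw [card_compl, Fintype.card_fin]; omega)
  refine ⟨S, T, hS, hT, fun h => by rw [h, inter_self, hT] at hST; omega, ?_⟩
  rw [dist_indicatorVec_indicatorVec_sq, hS, hT, inter_comm, hST]
  ring

lemma ncard_sqrt_image : (Real.sqrt '' {2, 4, 6}).ncard = 3 := by
  have hinj : Set.InjOn Real.sqrt {2, 4, 6} := fun a ha b hb h =>
    (Real.sqrt_inj (two_four_six_nonneg a ha) (two_four_six_nonneg b hb)).1 h
  rw [hinj.ncard_image, Set.ncard_eq_three]
  exact ⟨2, 4, 6, by norm_num, by norm_num, by norm_num, rfl⟩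

lemma distSet_johnsonRep_three (hn : 6 ≤ n) :
    distSet (JohnsonRep n 3) = Real.sqrt '' {2, 4, 6} := by
  ext d
  constructor
  · rintro ⟨x, hx, x', hx', hne, rfl⟩
    exact (mem_sqrt_image_iff_sq_mem two_four_six_nonneg dist_nonneg).2
      (dist_sq_mem_of_mem_johnsonRep hx hx' hne)
  · rintro ⟨e, he, rfl⟩
    obtain ⟨k, hk, rfl⟩ : ∃ k : ℕ, k < 3 ∧ e = 6 - 2 * k := by
      rcases he with rfl | rfl | rfl
      exacts [⟨2, by norm_num⟩, ⟨1, by norm_num⟩, ⟨0, by norm_num⟩]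
    obtain ⟨S, T, hS, hT, hST, hdist⟩ := exists_dist_sq_eq hn hk
    refine ⟨_, indicatorVec_mem_johnsonRep hS, _, indicatorVec_mem_johnsonRep hT, ?_, ?_⟩
    · exact indicatorVec_injective.ne hST
    · rw [← hdist, Real.sqrt_sq dist_nonneg]

lemma isSDistanceSet_johnsonRep_union_iff (hn : 6 ≤ n) {y : EuclideanSpace ℝ (Fin n)}
    (hy : y ∉ JohnsonRep n 3) :
    IsSDistanceSet 3 (JohnsonRep n 3 ∪ {y}) ↔
      ∀ T : Finset (Fin n), #T = 3 → dist (indicatorVec T) y ^ 2 ∈ ({2, 4, 6} : Set ℝ) := by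
  have hsub : Real.sqrt '' {2, 4, 6} ⊆ distSet (JohnsonRep n 3 ∪ {y}) :=
    distSet_johnsonRep_three hn ▸ distSet_mono Set.subset_union_left
  constructor
  · rintro ⟨hfin, hcard⟩ T hT
    have heq := Set.eq_of_subset_of_ncard_le hsub (by rw [hcard, ncard_sqrt_image]) hfin
    have hT' := indicatorVec_mem_johnsonRep hT
    refine (mem_sqrt_image_iff_sq_mem two_four_six_nonneg dist_nonneg).1 (heq ▸ ?_)
    exact ⟨_, Or.inl hT', y, Or.inr rfl, fun h => hy (h ▸ hT'), rfl⟩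
  · intro h
    have hdist : ∀ x ∈ JohnsonRep n 3, dist x y ∈ Real.sqrt '' {2, 4, 6} := by
      intro x hx
      obtain ⟨T, hT, rfl⟩ := mem_johnsonRep_iff.1 hx
      exact (mem_sqrt_image_iff_sq_mem two_four_six_nonneg dist_nonneg).2 (h T hT)
    have heq : distSet (JohnsonRep n 3 ∪ {y}) = Real.sqrt '' {2, 4, 6} := by
      refine subset_antisymm ?_ hsub
      rintro _ ⟨x, hx | rfl, x', hx' | rfl, hne, rfl⟩
      · exact distSet_johnsonRep_three hn ▸ ⟨x, hx, x', hx', hne, rfl⟩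
      · exact hdist x hx
      · exact dist_comm x x' ▸ hdist x' hx'
      · exact absurd rfl hne
    rw [IsSDistanceSet, heq, ncard_sqrt_image]
    exact ⟨Set.toFinite _, rfl⟩

lemma not_johnsonRepMaximal_three_iff (hn : 6 ≤ n) :
    ¬ JohnsonRepMaximal n 3 ↔ ∃ y ∈ Hyp n 3 \ JohnsonRep n 3,
      ∀ T : Finset (Fin n), #T = 3 → dist (indicatorVec T) y ^ 2 ∈ ({2, 4, 6} : Set ℝ) := by
  rw [JohnsonRepMaximal, not_not]
  exact exists_congr fun y => and_congr_right fun hy =>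
    isSDistanceSet_johnsonRep_union_iff hn hy.2

end JohnsonRep

section Window

variable {n : ℕ}

def TripleSumWindow (e : Fin n → ℝ) (τ : ℝ) : Prop :=
  ∀ T : Finset (Fin n), #T = 3 → ∑ i ∈ T, e i ∈ ({τ, τ + 1, τ + 2} : Set ℝ)

lemma mem_zero_one_two_of_add_mem {τ s d : ℝ} (hd : 0 ≤ d)
    (hs : s ∈ ({τ, τ + 1, τ + 2} : Set ℝ)) (hsd : s + d ∈ ({τ, τ + 1, τ + 2} : Set ℝ)) :
    d ∈ ({0, 1, 2} : Set ℝ) := by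
  simp only [Set.mem_insert_iff, Set.mem_singleton_iff] at hs hsd ⊢
  rcases hs with rfl | rfl | rfl <;> rcases hsd with h | h | h <;>
    first | (left; linarith) | (right; left; linarith) | (right; right; linarith)

lemma eq_of_add_two_mem {τ s : ℝ} (hs : s ∈ ({τ, τ + 1, τ + 2} : Set ℝ))
    (hs2 : s + 2 ∈ ({τ, τ + 1, τ + 2} : Set ℝ)) : s = τ := by
  simp only [Set.mem_insert_iff, Set.mem_singleton_iff] at hs hs2
  rcases hs with rfl | rfl | rfl <;> rcases hs2 with h | h | h <;> linarith

lemma eq_eight_or_nine_of_count_window {n q : ℕ} (hn : 6 ≤ n) (hq : q < n) {τ : ℝ}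
    (hk : ∀ k ≤ 3, k ≤ q → 3 - k ≤ n - q → (k : ℝ) ∈ ({τ, τ + 1, τ + 2} : Set ℝ))
    (hE : (n : ℝ) * (q - 3 - 2 * τ) = (q - 3) ^ 2) : n = 8 ∨ n = 9 := by
  simp only [Set.mem_insert_iff, Set.mem_singleton_iff] at hk
  have hn' : (6 : ℝ) ≤ n := by exact_mod_cast hn
  by_cases hp : 3 ≤ n - q
  · have h0 := hk 0 (by norm_num) (by omega) (by omega)
    have hq2 : q ≤ 2 := by
      by_contra! hq3
      have h3 := hk 3 le_rfl hq3 (by omega)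
      push_cast at h0 h3
      rcases h0 with h0 | h0 | h0 <;> rcases h3 with h3 | h3 | h3 <;> linarith
    push_cast at h0
    obtain rfl | rfl | rfl : τ = 0 ∨ τ = -1 ∨ τ = -2 := by
      rcases h0 with h | h | h
      exacts [Or.inl (by linarith), Or.inr (Or.inl (by linarith)), Or.inr (Or.inr (by linarith))]
    all_goals interval_cases q <;> norm_num at hE
    all_goals first | omega | (right; exact_mod_cast hE) | (exfalso; linarith)
  · have h3 := hk 3 le_rfl (by omega) (by omega)
    obtain ⟨p, hp0, rfl⟩ : ∃ p, 0 < p ∧ q = n - p := ⟨n - q, by omega, by omega⟩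
    have hk' := hk (3 - p) (by omega) (by omega) (by omega)
    rw [Nat.cast_sub (by omega : p ≤ n)] at hE
    push_cast at h3
    have hp2 : p ≤ 2 := by omega
    interval_cases p <;> norm_num at hk'
    · obtain rfl | rfl : τ = 1 ∨ τ = 2 := by
        rcases h3 with h | h | h <;> rcases hk' with h' | h' | h' <;>
          first | (left; linarith) | (right; linarith)
      · exact Or.inl (by exact_mod_cast (by linear_combination hE / 2 : (n : ℝ) = 8))
      · norm_num at hE
        nlinarith
    · obtain rfl : τ = 1 := by
        rcases h3 with h | h | h <;> rcases hk' with h' | h' | h' <;> linarith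
      have h25 : 3 * n = 25 := by exact_mod_cast (by linear_combination hE : (3 * n : ℝ) = 25)
      omega

namespace TripleSumWindow

variable {e : Fin n → ℝ} {τ : ℝ}

lemma add_add_mem (hw : TripleSumWindow e τ) {i j k : Fin n} (hij : i ≠ j) (hik : i ≠ k)
    (hjk : j ≠ k) : e i + e j + e k ∈ ({τ, τ + 1, τ + 2} : Set ℝ) := by
  have h := hw {i, j, k} (card_eq_three.2 ⟨i, j, k, hij, hik, hjk, rfl⟩)
  rwa [sum_insert (by simp [hij, hik]), sum_pair hjk, ← add_assoc] at h

lemma mem_zero_one_two (hw : TripleSumWindow e τ) (hn : 4 ≤ n) (he : ∀ i, 0 ≤ e i) {i₀ : Fin n}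
    (hi₀ : e i₀ = 0) (i : Fin n) : e i ∈ ({0, 1, 2} : Set ℝ) := by
  obtain ⟨k, l, hkl, hk, hl⟩ := exists_ne_of_card_add_two_le {i, i₀}
    (by have := card_le_two (a := i) (b := i₀); simp only [Fintype.card_fin]; omega)
  simp only [mem_insert, mem_singleton, not_or] at hk hl
  have h₀ := hw.add_add_mem (Ne.symm hk.2) (Ne.symm hl.2) hkl
  have hi := hw.add_add_mem (Ne.symm hk.1) (Ne.symm hl.1) hkl
  rw [hi₀, zero_add] at h₀
  exact mem_zero_one_two_of_add_mem (he i) h₀ (by convert hi using 1; ring)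

lemma add_eq_of_eq_two (hw : TripleSumWindow e τ) {i₀ j : Fin n} (hi₀ : e i₀ = 0) (hj : e j = 2)
    {k l : Fin n} (hkl : k ≠ l) (hki₀ : k ≠ i₀) (hkj : k ≠ j) (hli₀ : l ≠ i₀) (hlj : l ≠ j) :
    e k + e l = τ := by
  have h₀ := hw.add_add_mem (Ne.symm hki₀) (Ne.symm hli₀) hkl
  have h₂ := hw.add_add_mem (Ne.symm hkj) (Ne.symm hlj) hkl
  rw [hi₀, zero_add] at h₀
  rw [hj, add_assoc, add_comm (2 : ℝ)] at h₂
  exact eq_of_add_two_mem h₀ h₂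

lemma eq_half_of_eq_two (hw : TripleSumWindow e τ) (hn : 5 ≤ n) {i₀ j : Fin n} (hi₀ : e i₀ = 0)
    (hj : e j = 2) {k : Fin n} (hki₀ : k ≠ i₀) (hkj : k ≠ j) : e k = τ / 2 := by
  obtain ⟨l, m, hlm, hl, hm⟩ := exists_ne_of_card_add_two_le {i₀, j, k}
    (by have := card_le_three (a := i₀) (b := j) (c := k); simp only [Fintype.card_fin]; omega)
  simp only [mem_insert, mem_singleton, not_or] at hl hm
  have hkl := hw.add_eq_of_eq_two hi₀ hj (Ne.symm hl.2.2) hki₀ hkj hl.1 hl.2.1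
  have hkm := hw.add_eq_of_eq_two hi₀ hj (Ne.symm hm.2.2) hki₀ hkj hm.1 hm.2.1
  have hlm := hw.add_eq_of_eq_two hi₀ hj hlm hl.1 hl.2.1 hm.1 hm.2.1
  linarith

lemma eq_nine_of_eq_two (hw : TripleSumWindow e τ) (hn : 6 ≤ n)
    (hval : ∀ i, e i ∈ ({0, 1, 2} : Set ℝ)) {i₀ j : Fin n} (hi₀ : e i₀ = 0) (hj : e j = 2)
    (hE : (n : ℝ) * (∑ i, e i ^ 2 - 3 - 2 * τ) = (∑ i, e i - 3) ^ 2) : n = 9 := by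
  have hi₀j : i₀ ≠ j := fun h => by simp [h, hj] at hi₀
  have hrest : ∀ k, k ≠ i₀ → k ≠ j → e k = τ / 2 :=
    fun k => hw.eq_half_of_eq_two (by omega) hi₀ hj
  obtain ⟨k, -, -, hk, -⟩ := exists_ne_of_card_add_two_le {i₀, j}
    (by have := card_le_two (a := i₀) (b := j); simp only [Fintype.card_fin]; omega)
  simp only [mem_insert, mem_singleton, not_or] at hk
  obtain ⟨m, hm, rfl⟩ : ∃ m ∈ ({0, 1, 2} : Set ℝ), τ = 2 * m :=
    ⟨τ / 2, hrest k hk.1 hk.2 ▸ hval k, by ring⟩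
  rw [sum_eq_add_add_of_eq_off_pair hi₀j hrest,
    sum_eq_add_add_of_eq_off_pair (f := fun i => e i ^ 2) hi₀j fun k hki₀ hkj => by
      rw [hrest k hki₀ hkj], hi₀, hj, Fintype.card_fin] at hE
  have hn' : (6 : ℝ) ≤ n := by exact_mod_cast hn
  rcases hm with rfl | rfl | rfl
  · nlinarith
  · have : (n : ℝ) = 9 := by linear_combination hE
    exact_mod_cast this
  · nlinarith

lemma eq_eight_or_nine_of_zero_one (hw : TripleSumWindow e τ) (hn : 6 ≤ n)
    (h01 : ∀ i, e i = 0 ∨ e i = 1) {i₀ : Fin n} (hi₀ : e i₀ = 0)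
    (hE : (n : ℝ) * (∑ i, e i ^ 2 - 3 - 2 * τ) = (∑ i, e i - 3) ^ 2) : n = 8 ∨ n = 9 := by
  set B : Finset (Fin n) := {i | e i = 1}
  have hsum : ∀ T : Finset (Fin n), ∑ i ∈ T, e i = #(T ∩ B) := by
    intro T
    rw [← filter_mem_eq_inter, ← sum_boole]
    refine sum_congr rfl fun i _ => ?_
    rcases h01 i with h | h <;> simp [B, h]
  have hsq : ∑ i, e i ^ 2 = ∑ i, e i :=
    sum_congr rfl fun i _ => by rcases h01 i with h | h <;> rw [h] <;> norm_num
  rw [hsq, hsum, univ_inter] at hE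
  have hi₀B : i₀ ∉ B := by simp [B, hi₀]
  refine eq_eight_or_nine_of_count_window hn ?_ ?_ hE
  · simpa using card_lt_univ_of_notMem hi₀B
  · intro k hk3 hkB hkc
    obtain ⟨T, hT, hTB⟩ := exists_card_eq_card_inter_eq B hk3 hkB
      (by rwa [card_compl, Fintype.card_fin])
    exact hTB ▸ hsum T ▸ hw T hT

theorem eq_eight_or_nine (hw : TripleSumWindow e τ) (hn : 6 ≤ n) (he : ∀ i, 0 ≤ e i)
    {i₀ : Fin n} (hi₀ : e i₀ = 0)
    (hE : (n : ℝ) * (∑ i, e i ^ 2 - 3 - 2 * τ) = (∑ i, e i - 3) ^ 2) : n = 8 ∨ n = 9 := by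
  have hval := hw.mem_zero_one_two (by omega) he hi₀
  by_cases h2 : ∃ j, e j = 2
  · obtain ⟨j, hj⟩ := h2
    exact Or.inr (hw.eq_nine_of_eq_two hn hval hi₀ hj hE)
  · push Not at h2
    refine hw.eq_eight_or_nine_of_zero_one hn (fun i => ?_) hi₀ hE
    rcases hval i with h | h | h
    exacts [Or.inl h, Or.inr h, absurd h (h2 i)]

end TripleSumWindow

end Window

lemma eq_eight_or_nine_of_dist_sq_mem {n : ℕ} (hn : 6 ≤ n) {y : EuclideanSpace ℝ (Fin n)}
    (hy : y ∈ Hyp n 3)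
    (h : ∀ T : Finset (Fin n), #T = 3 → dist (indicatorVec T) y ^ 2 ∈ ({2, 4, 6} : Set ℝ)) :
    n = 8 ∨ n = 9 := by
  have : Nonempty (Fin n) := ⟨⟨0, by omega⟩⟩
  obtain ⟨i₀, hi₀⟩ := Finite.exists_min fun i => y i
  set a := y i₀
  have hy3 : ∑ i, y i = 3 := by simpa [Hyp] using hy
  refine TripleSumWindow.eq_eight_or_nine (e := fun i => y i - a)
    (τ := (∑ i, y i ^ 2 - 3) / 2 - 3 * a) ?_ hn (fun i => sub_nonneg.2 (hi₀ i)) (i₀ := i₀)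
    (sub_self a) ?_
  · intro T hT
    have hT' := h T hT
    rw [dist_indicatorVec_sq, hT] at hT'
    rw [sum_sub_distrib, sum_const, hT, nsmul_eq_mul]
    simp only [Set.mem_insert_iff, Set.mem_singleton_iff] at hT' ⊢
    push_cast at hT' ⊢
    rcases hT' with h | h | h
    exacts [Or.inr (Or.inr (by linarith)), Or.inr (Or.inl (by linarith)), Or.inl (by linarith)]
  -- both sides equal `(n * a) ^ 2`
  · have hu : ∑ i, (y i - a) = 3 - n * a := by
      rw [sum_sub_distrib, hy3, sum_const, card_univ, Fintype.card_fin, nsmul_eq_mul]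
    have hv : ∑ i, (y i - a) ^ 2 = ∑ i, y i ^ 2 - 6 * a + n * a ^ 2 := by
      simp only [sub_sq, sum_add_distrib, sum_sub_distrib, ← sum_mul, ← mul_sum, hy3, sum_const,
        card_univ, Fintype.card_fin, nsmul_eq_mul]
      ring
    rw [hu, hv]
    ring

lemma not_johnsonRepMaximal_nine : ¬ JohnsonRepMaximal 9 3 := by
  refine (not_johnsonRepMaximal_three_iff (by norm_num)).2
    ⟨WithLp.toLp 2 fun _ => 1 / 3, ⟨by norm_num [Hyp], fun h => ?_⟩, fun T hT => ?_⟩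
  · rcases h.1 0 with h0 | h0 <;> norm_num at h0
  · rw [dist_indicatorVec_sq, hT]
    norm_num [hT]

lemma not_johnsonRepMaximal_eight : ¬ JohnsonRepMaximal 8 3 := by
  refine (not_johnsonRepMaximal_three_iff (by norm_num)).2
    ⟨WithLp.toLp 2 fun i => 1 / 2 - if i = 0 then 1 else 0,
      ⟨by norm_num [Hyp, sum_sub_distrib], fun h => ?_⟩, fun T hT => ?_⟩
  · rcases h.1 0 with h0 | h0 <;> norm_num at h0
  · have hsq : ∀ i : Fin 8, (1 / 2 - if i = 0 then 1 else 0 : ℝ) ^ 2 = 1 / 4 := fun i => by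
      split_ifs <;> norm_num
    rw [dist_indicatorVec_sq, hT]
    by_cases h0 : (0 : Fin 8) ∈ T <;> norm_num [sum_sub_distrib, hsq, h0, hT]

theorem johnsonRep_three_maximal_iff (n : ℕ) (hn : 6 ≤ n) :
    (n ≠ 8 → n ≠ 9 → JohnsonRepMaximal n 3) ∧
    ¬ JohnsonRepMaximal 8 3 ∧ ¬ JohnsonRepMaximal 9 3 := by
  refine ⟨fun h8 h9 => ?_, not_johnsonRepMaximal_eight, not_johnsonRepMaximal_nine⟩
  by_contra hmax
  obtain ⟨y, ⟨hyH, -⟩, hy⟩ := (not_johnsonRepMaximal_three_iff hn).1 hmax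
  rcases eq_eight_or_nine_of_dist_sq_mem hn hyH hy with rfl | rfl <;> contradiction
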